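/- arXiv:cs/0010034 — 2 statements merged into one kernel-verified Lean document; each statement's English description precedes it below -/
import Mathlib

section
/- (Supporting lemma for Propositions 3 and 4 on when tabling can save a reduction step.) Let P be a term rewriting system and t a term. Suppose that in some rewrite sequence starting from t a rule l → r of P with non-variable right-hand side r is applied to a redex whose root symbol f does not occur in t. Then the needs graph of P contains a vertex, namely the vertex for f, that has in-degree at least one and out-degree at least one and that is reachable by a directed path from a vertex representing a symbol occurring in t. -/
/-- First-order terms over a signature `σ` (function symbols and constants,
where constants are symbols applied to the empty argument list) and
variables `ν`. -/
inductive Term (σ ν : Type) : Type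
  | var : ν → Term σ ν
  | app : σ → List (Term σ ν) → Term σ ν

namespace Term

variable {σ ν : Type}

/-- Applying a substitution to a term. -/
def subst (θ : ν → Term σ ν) : Term σ ν → Term σ ν
  | .var v => θ v
  | .app f ts => .app f (ts.attach.map fun x => subst θ x.1)
  decreasing_by have := List.sizeOf_lt_of_mem x.2; simp at this ⊢; omega

/-- The set of function symbols and constants occurring in a term. -/
def symbols : Term σ ν → Set σ
  | .var _ => ∅
  | .app f ts => {f} ∪ (ts.attach.map fun x => symbols x.1).foldr (· ∪ ·) ∅
  decreasing_by have := List.sizeOf_lt_of_mem x.2; simp at this ⊢; omega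

/-- The set of variables occurring in a term. -/
def vars : Term σ ν → Set ν
  | .var v => {v}
  | .app _ ts => (ts.attach.map fun x => vars x.1).foldr (· ∪ ·) ∅
  decreasing_by have := List.sizeOf_lt_of_mem x.2; simp at this ⊢; omega

/-- The outermost (root) symbol of a term, if any. -/
def root : Term σ ν → Option σ
  | .var _ => none
  | .app f _ => some f

/-- `u.IsSubtermOf t` holds when `u` is a (not necessarily proper) subterm of `t`. -/
inductive IsSubtermOf : Term σ ν → Term σ ν → Prop
  | refl (t : Term σ ν) : IsSubtermOf t t
  | arg {u t : Term σ ν} {f : σ} {ts : List (Term σ ν)} :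
      t ∈ ts → IsSubtermOf u t → IsSubtermOf u (.app f ts)

end Term

/-- A rewrite rule `l → r`: `l` is not a variable and every variable of `r`
occurs in `l`. -/
structure Rule (σ ν : Type) where
  lhs : Term σ ν
  rhs : Term σ ν
  lhs_not_var : ∀ v, lhs ≠ .var v
  vars_subset : rhs.vars ⊆ lhs.vars

/-- A term rewriting system: a finite set (list) of rules. -/
structure TRS (σ ν : Type) where
  rules : List (Rule σ ν)

namespace TRS

variable {σ ν : Type}

/-- The one-step rewrite relation of `P`: replace an instance `lσ` of a
left-hand side, occurring as a subterm, by the corresponding instance `rσ`. -/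
inductive Rewrite (P : TRS σ ν) : Term σ ν → Term σ ν → Prop
  | root {ρ : Rule σ ν} (hρ : ρ ∈ P.rules) (θ : ν → Term σ ν) :
      Rewrite P (ρ.lhs.subst θ) (ρ.rhs.subst θ)
  | congr {s t : Term σ ν} (f : σ) (pre post : List (Term σ ν)) :
      Rewrite P s t →
      Rewrite P (.app f (pre ++ s :: post)) (.app f (pre ++ t :: post))

/-- A symbol is defined if it is the outermost symbol of the left-hand side
of some rule. -/
def Defined (P : TRS σ ν) (f : σ) : Prop :=
  ∃ ρ ∈ P.rules, ρ.lhs.root = some f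

/-- Edge `f ⟶ g` of the needs graph: `f` is the root (defined) symbol of the
left-hand side of some rule whose right-hand side contains `g`. -/
def NeedsEdge (P : TRS σ ν) (f g : σ) : Prop :=
  ∃ ρ ∈ P.rules, ρ.lhs.root = some f ∧ g ∈ ρ.rhs.symbols

/-- A term is in normal form if no subterm of it is an instance of the
left-hand side of a rule of `P`. -/
def NormalForm (P : TRS σ ν) (s : Term σ ν) : Prop :=
  ∀ u : Term σ ν, u.IsSubtermOf s → ∀ ρ ∈ P.rules, ∀ θ : ν → Term σ ν, u ≠ ρ.lhs.subst θ

end TRS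

/-- The one-step rewrite relation of `P` restricted to applications of the
particular rule `ρ`. -/
inductive TRS.RewriteWith {σ ν : Type} (P : TRS σ ν) (ρ : Rule σ ν) :
    Term σ ν → Term σ ν → Prop
  | root (hρ : ρ ∈ P.rules) (θ : ν → Term σ ν) :
      TRS.RewriteWith P ρ (ρ.lhs.subst θ) (ρ.rhs.subst θ)
  | congr {s t : Term σ ν} (f : σ) (pre post : List (Term σ ν)) :
      TRS.RewriteWith P ρ s t →
      TRS.RewriteWith P ρ (.app f (pre ++ s :: post)) (.app f (pre ++ t :: post))

section Aux

variable {σ ν : Type}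

lemma mem_foldr_union {α : Type} (L : List (Set α)) (a : α) :
    a ∈ L.foldr (· ∪ ·) ∅ ↔ ∃ S ∈ L, a ∈ S := by
  induction L with
  | nil => simp
  | cons S L ih => simp [Set.mem_union, ih]

lemma Term.mem_symbols_app {g f : σ} {ts : List (Term σ ν)} :
    g ∈ (Term.app f ts).symbols ↔ g = f ∨ ∃ u ∈ ts, g ∈ u.symbols := by
  rw [Term.symbols]
  simp [mem_foldr_union, Set.mem_union]

lemma Term.mem_vars_app {v : ν} {f : σ} {ts : List (Term σ ν)} :
    v ∈ (Term.app f ts).vars ↔ ∃ u ∈ ts, v ∈ u.vars := by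
  rw [Term.vars]
  simp [mem_foldr_union]

lemma Term.subst_app (θ : ν → Term σ ν) (f : σ) (ts : List (Term σ ν)) :
    (Term.app f ts).subst θ = Term.app f (ts.attach.map fun x => x.1.subst θ) := by
  rw [Term.subst]

theorem Term.subst_symbols_cases (θ : ν → Term σ ν) (g : σ) :
    ∀ t : Term σ ν, g ∈ (t.subst θ).symbols →
      g ∈ t.symbols ∨ ∃ v ∈ t.vars, g ∈ (θ v).symbols
  | .var v, h => by
    right
    exact ⟨v, by simp [Term.vars], by simpa [Term.subst] using h⟩
  | .app f ts, h => by
    rw [Term.subst_app, Term.mem_symbols_app] at h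
    rcases h with rfl | ⟨u', hu', hg⟩
    · left; rw [Term.mem_symbols_app]; left; rfl
    · simp only [List.mem_map, List.mem_attach, true_and, Subtype.exists] at hu'
      obtain ⟨u, hu, rfl⟩ := hu'
      rcases Term.subst_symbols_cases θ g u hg with h' | ⟨v, hv, hg'⟩
      · left; rw [Term.mem_symbols_app]; exact Or.inr ⟨u, hu, h'⟩
      · right; exact ⟨v, Term.mem_vars_app.mpr ⟨u, hu, hv⟩, hg'⟩
  decreasing_by have := List.sizeOf_lt_of_mem hu; simp at this ⊢; omega

theorem Term.symbols_subst_of_mem_vars (θ : ν → Term σ ν) (g : σ) :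
    ∀ t : Term σ ν, ∀ v ∈ t.vars, g ∈ (θ v).symbols → g ∈ (t.subst θ).symbols
  | .var w, v, hv, hg => by
    simp [Term.vars] at hv
    subst hv
    simpa [Term.subst] using hg
  | .app f ts, v, hv, hg => by
    rw [Term.mem_vars_app] at hv
    obtain ⟨u, hu, hv⟩ := hv
    have := Term.symbols_subst_of_mem_vars θ g u v hv hg
    rw [Term.subst_app, Term.mem_symbols_app]
    refine Or.inr ⟨u.subst θ, ?_, this⟩
    simp only [List.mem_map, List.mem_attach, true_and, Subtype.exists]
    exact ⟨u, hu, rfl⟩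
  decreasing_by have := List.sizeOf_lt_of_mem hu; simp at this ⊢; omega

lemma Term.root_mem_symbols_subst {t : Term σ ν} {f : σ} (h : t.root = some f)
    (θ : ν → Term σ ν) : f ∈ (t.subst θ).symbols := by
  cases t with
  | var v => simp [Term.root] at h
  | app g ts =>
    simp [Term.root] at h
    subst h
    rw [Term.subst_app, Term.mem_symbols_app]
    left; rfl

lemma rewrite_symbols {P : TRS σ ν} {s s' : Term σ ν} (h : P.Rewrite s s') :
    ∀ g ∈ s'.symbols, ∃ a ∈ s.symbols, Relation.ReflTransGen P.NeedsEdge a g := by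
  induction h with
  | @root ρ hρ θ =>
    intro g hg
    rcases Term.subst_symbols_cases θ g _ hg with hg' | ⟨v, hv, hg'⟩
    · obtain ⟨f0, hf0⟩ : ∃ f0, ρ.lhs.root = some f0 := by
        cases hl : ρ.lhs with
        | var v => exact absurd hl (ρ.lhs_not_var v)
        | app f0 ts => exact ⟨f0, by simp [Term.root]⟩
      exact ⟨f0, Term.root_mem_symbols_subst hf0 θ,
        Relation.ReflTransGen.single ⟨ρ, hρ, hf0, hg'⟩⟩
    · exact ⟨g, Term.symbols_subst_of_mem_vars θ g ρ.lhs v (ρ.vars_subset hv) hg',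
        Relation.ReflTransGen.refl⟩
  | @congr s t f pre post _ ih =>
    intro g hg
    rw [Term.mem_symbols_app] at hg
    rcases hg with rfl | ⟨u, hu, hg⟩
    · exact ⟨g, Term.mem_symbols_app.mpr (Or.inl rfl), Relation.ReflTransGen.refl⟩
    · rcases List.mem_append.mp hu with hu | hu
      · exact ⟨g, Term.mem_symbols_app.mpr (Or.inr ⟨u, by simp [hu], hg⟩),
          Relation.ReflTransGen.refl⟩
      · rcases List.mem_cons.mp hu with rfl | hu
        · obtain ⟨a, ha, hpath⟩ := ih g hg
          exact ⟨a, Term.mem_symbols_app.mpr (Or.inr ⟨s, by simp, ha⟩), hpath⟩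
        · exact ⟨g, Term.mem_symbols_app.mpr (Or.inr ⟨u, by simp [hu], hg⟩),
            Relation.ReflTransGen.refl⟩

lemma rewrite_star_symbols {P : TRS σ ν} {s s' : Term σ ν}
    (h : Relation.ReflTransGen P.Rewrite s s') :
    ∀ g ∈ s'.symbols, ∃ a ∈ s.symbols, Relation.ReflTransGen P.NeedsEdge a g := by
  induction h with
  | refl => exact fun g hg => ⟨g, hg, Relation.ReflTransGen.refl⟩
  | tail _ hstep ih =>
    intro g hg
    obtain ⟨b, hb, hp1⟩ := rewrite_symbols hstep g hg
    obtain ⟨a, ha, hp2⟩ := ih b hb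
    exact ⟨a, ha, hp2.trans hp1⟩

lemma rewriteWith_root_mem {P : TRS σ ν} {ρ : Rule σ ν} {s s' : Term σ ν} {f : σ}
    (hf : ρ.lhs.root = some f) (h : P.RewriteWith ρ s s') : f ∈ s.symbols := by
  induction h with
  | root hρ θ => exact Term.root_mem_symbols_subst hf θ
  | @congr s t g pre post _ ih =>
    exact Term.mem_symbols_app.mpr (Or.inr ⟨s, by simp, ih⟩)

end Aux


/-- If in some rewrite sequence starting from `t` a rule
`ρ = (l → r)` with non-variable right-hand side is applied to a redex whose
root symbol `f` does not occur in `t`, then the vertex for `f` in the needs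
graph of `P` has in-degree at least one and out-degree at least one, and is
reachable by a directed path from a vertex representing a symbol of `t`. -/
theorem redex_with_fresh_root_gives_useful_vertex {σ ν : Type} (P : TRS σ ν)
    (t : Term σ ν) (ρ : Rule σ ν) (hρ : ρ ∈ P.rules) (f : σ)
    (hf : ρ.lhs.root = some f)
    (hrhs : ∀ v : ν, ρ.rhs ≠ .var v)
    (hnotocc : f ∉ t.symbols)
    (happlied : ∃ s s' : Term σ ν,
      Relation.ReflTransGen P.Rewrite t s ∧ P.RewriteWith ρ s s') :
    (∃ g : σ, P.NeedsEdge g f) ∧ (∃ g : σ, P.NeedsEdge f g) ∧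
      ∃ a ∈ t.symbols, Relation.ReflTransGen P.NeedsEdge a f := by
  obtain ⟨s, s', hstar, hwith⟩ := happlied
  have hfs : f ∈ s.symbols := rewriteWith_root_mem hf hwith
  obtain ⟨a, ha, hpath⟩ := rewrite_star_symbols hstar f hfs
  refine ⟨?_, ?_, a, ha, hpath⟩
  · rcases hpath.cases_tail with h | ⟨b, _, hb⟩
    · exact absurd (h ▸ ha) hnotocc
    · exact ⟨b, hb⟩
  · obtain ⟨h0, ts'⟩ : ∃ h0 ts', ρ.rhs = Term.app h0 ts' := by
      cases hr : ρ.rhs with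
      | var v => exact absurd hr (hrhs v)
      | app h0 ts' => exact ⟨h0, ts', rfl⟩
    obtain ⟨ts', hr⟩ := ts'
    exact ⟨h0, ρ, hρ, hf, by rw [hr]; exact Term.mem_symbols_app.mpr (Or.inl rfl)⟩
end

section
/- If the needs graph of a term rewriting system P has no vertex with in-degree at least one and out-degree at least one, then the needs graph of P is acyclic, and consequently the rewrite relation of P is terminating: there is no infinite rewrite sequence t0 →_P t1 →_P t2 →_P ... . In particular (Proposition 3 of the paper, contrapositive of its graph condition), if the computation of the normal form of some term with respect to P performs infinitely many reduction steps, then the needs graph of P contains a node with in-degree at least one and out-degree at least one. -/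
/-! A cycle `f ⟶⁺ f` of the needs graph gives `f` an incoming and an outgoing edge.

For termination, interpret terms in `ℕ` by `[x] = 1` and `[f(t₁, …, tₙ)] = c f * (1 + Σ [tᵢ])`,
which is strictly monotone in every argument. If `T` is the total weight of the instantiated
arguments of a left-hand side `f(…)θ`, every variable of the right-hand side `r` weighs at most
`T` after instantiation, so `[rθ] ≤ [r] (1 + T)`, and `[rθ] < [lθ] = c f (1 + T)` as soon as
`[r] < c f`. Under the hypothesis, every symbol of a right-hand side has an incoming edge, hence
no outgoing one; weigh those symbols `2` and each symbol with an outgoing edge more than all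
right-hand sides weighed uniformly by `2`. A rule with root `f` then either collapses to a variable
(`[r] = 1 < 2 ≤ c f`) or gives `f` an outgoing edge, and `[r] < c f` in both cases. -/

theorem Set.mem_list_foldr_union {α : Type*} {x : α} {L : List (Set α)} :
    x ∈ L.foldr (· ∪ ·) ∅ ↔ ∃ s ∈ L, x ∈ s := by
  induction L with
  | nil => simp
  | cons s L ih => simp [ih]

theorem Relation.TransGen.exists_rel_left_and_right {α : Type*} {r : α → α → Prop} {a b : α}
    (h : TransGen r a b) : (∃ c, r c b) ∧ ∃ c, r a c :=
  ⟨(TransGen.tail'_iff.1 h).imp fun _ hc => hc.2, (TransGen.head'_iff.1 h).imp fun _ hc => hc.1⟩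

namespace Term

variable {σ ν : Type}

theorem induction_on {motive : Term σ ν → Prop} (var : ∀ v, motive (.var v))
    (app : ∀ f ts, (∀ t ∈ ts, motive t) → motive (.app f ts)) : ∀ t, motive t
  | .var v => var v
  | .app f ts => app f ts fun t _ => induction_on var app t
  decreasing_by have := List.sizeOf_lt_of_mem ‹t ∈ ts›; simp at this ⊢; omega

@[simp] theorem subst_var (θ : ν → Term σ ν) (v : ν) : (Term.var v).subst θ = θ v := by
  rw [subst]

@[simp] theorem subst_app_s9 (θ : ν → Term σ ν) (f : σ) (ts : List (Term σ ν)) :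
    (Term.app f ts).subst θ = .app f (ts.map (subst θ)) := by
  rw [subst, List.attach_map_val]

@[simp] theorem mem_vars_var {v w : ν} : v ∈ (Term.var w : Term σ ν).vars ↔ v = w := by
  rw [vars]; rfl

@[simp] theorem mem_vars_app_s9 {v : ν} {f : σ} {ts : List (Term σ ν)} :
    v ∈ (Term.app f ts).vars ↔ ∃ t ∈ ts, v ∈ t.vars := by
  rw [vars, List.attach_map_val, Set.mem_list_foldr_union]
  simp

@[simp] theorem mem_symbols_app_s9 {g f : σ} {ts : List (Term σ ν)} :
    g ∈ (Term.app f ts).symbols ↔ g = f ∨ ∃ t ∈ ts, g ∈ t.symbols := by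
  rw [symbols, List.attach_map_val, Set.mem_union, Set.mem_list_foldr_union]
  simp

def weight (c : σ → ℕ) : Term σ ν → ℕ
  | .var _ => 1
  | .app f ts => c f * (1 + (ts.attach.map fun x => weight c x.1).sum)
  decreasing_by have := List.sizeOf_lt_of_mem x.2; simp at this ⊢; omega

section weight

variable (c : σ → ℕ)

@[simp] theorem weight_var (v : ν) : (Term.var v).weight c = 1 := by
  rw [weight]

@[simp] theorem weight_app (f : σ) (ts : List (Term σ ν)) :
    (Term.app f ts).weight c = c f * (1 + (ts.map (weight c)).sum) := by
  rw [weight, List.attach_map_val]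

variable {c}

theorem weight_congr {c' : σ → ℕ} {t : Term σ ν} (h : ∀ g ∈ t.symbols, c g = c' g) :
    t.weight c = t.weight c' := by
  induction t using induction_on with
  | var v => simp
  | app f ts ih =>
    simp only [mem_symbols_app_s9] at h
    rw [weight_app, weight_app, h f (.inl rfl),
      List.map_congr_left fun u hu => ih u hu fun g hg => h g (.inr ⟨u, hu, hg⟩)]

theorem weight_le_weight_subst (hc : ∀ f, 0 < c f) (θ : ν → Term σ ν) {t : Term σ ν} {v : ν}
    (hv : v ∈ t.vars) : (θ v).weight c ≤ (t.subst θ).weight c := by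
  induction t using induction_on with
  | var w => simp_all
  | app f ts ih =>
    obtain ⟨u, hu, hvu⟩ := mem_vars_app_s9.1 hv
    calc (θ v).weight c ≤ (u.subst θ).weight c := ih u hu hvu
      _ ≤ (ts.map fun u => (u.subst θ).weight c).sum :=
          List.single_le_sum (fun _ _ => Nat.zero_le _) _ (List.mem_map_of_mem hu)
      _ ≤ c f * (1 + (ts.map fun u => (u.subst θ).weight c).sum) :=
          le_mul_of_one_le_of_le (hc f) (Nat.le_add_left _ _)
      _ = ((Term.app f ts).subst θ).weight c := by simp [Function.comp_def]

theorem weight_subst_le (θ : ν → Term σ ν) {T : ℕ} {t : Term σ ν}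
    (hT : ∀ v ∈ t.vars, (θ v).weight c ≤ T) : (t.subst θ).weight c ≤ t.weight c * (1 + T) := by
  induction t using induction_on with
  | var w => simpa using (hT w (mem_vars_var.2 rfl)).trans (Nat.le_add_left _ _)
  | app f ts ih =>
    have hargs : (ts.map fun u => (u.subst θ).weight c).sum ≤ (ts.map (weight c)).sum * (1 + T) := by
      rw [← List.sum_map_mul_right]
      exact List.sum_le_sum fun u hu => ih u hu fun v hv => hT v (mem_vars_app_s9.2 ⟨u, hu, hv⟩)
    calc ((Term.app f ts).subst θ).weight c
        = c f * (1 + (ts.map fun u => (u.subst θ).weight c).sum) := by simp [Function.comp_def]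
      _ ≤ c f * ((1 + (ts.map (weight c)).sum) * (1 + T)) := by gcongr; nlinarith
      _ = (Term.app f ts).weight c * (1 + T) := by rw [weight_app, mul_assoc]

end weight

end Term

namespace Rule

variable {σ ν : Type} {c : σ → ℕ}

theorem weight_subst_lt (hc : ∀ f, 0 < c f) (ρ : Rule σ ν)
    (hρ : ∀ f, ρ.lhs.root = some f → ρ.rhs.weight c < c f) (θ : ν → Term σ ν) :
    (ρ.rhs.subst θ).weight c < (ρ.lhs.subst θ).weight c := by
  obtain ⟨f, ts, hl⟩ : ∃ f ts, ρ.lhs = .app f ts := by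
    cases hl : ρ.lhs with
    | var v => exact absurd hl (ρ.lhs_not_var v)
    | app f ts => exact ⟨f, ts, rfl⟩
  set T := (ts.map fun u => (u.subst θ).weight c).sum
  have hT : ∀ v ∈ ρ.rhs.vars, (θ v).weight c ≤ T := by
    intro v hv
    obtain ⟨u, hu, hvu⟩ := Term.mem_vars_app_s9.1 (hl ▸ ρ.vars_subset hv)
    exact (Term.weight_le_weight_subst hc θ hvu).trans
      (List.single_le_sum (fun _ _ => Nat.zero_le _) _ (List.mem_map_of_mem hu))
  calc (ρ.rhs.subst θ).weight c ≤ ρ.rhs.weight c * (1 + T) := Term.weight_subst_le θ hT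
    _ < c f * (1 + T) := Nat.mul_lt_mul_of_pos_right (hρ f (by rw [hl, Term.root])) (by omega)
    _ = (ρ.lhs.subst θ).weight c := by simp [hl, T, Function.comp_def]

end Rule

namespace TRS

variable {σ ν : Type} {P : TRS σ ν} {c : σ → ℕ}

theorem weight_lt_of_rewrite (hc : ∀ f, 0 < c f)
    (hP : ∀ ρ ∈ P.rules, ∀ θ, (ρ.rhs.subst θ).weight c < (ρ.lhs.subst θ).weight c)
    {s t : Term σ ν} (h : P.Rewrite s t) : t.weight c < s.weight c := by
  induction h with
  | root hρ θ => exact hP _ hρ θ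
  | congr f pre post _ ih =>
    simp only [Term.weight_app, List.map_append, List.map_cons, List.sum_append, List.sum_cons]
    exact Nat.mul_lt_mul_of_pos_left (by omega) (hc f)

theorem not_exists_infinite_rewrite_of_weight_rhs_lt (hc : ∀ f, 0 < c f)
    (hP : ∀ ρ ∈ P.rules, ∀ f, ρ.lhs.root = some f → ρ.rhs.weight c < c f) :
    ¬ ∃ t : ℕ → Term σ ν, ∀ n : ℕ, P.Rewrite (t n) (t (n + 1)) := by
  rintro ⟨t, ht⟩
  obtain ⟨n, hn⟩ := WellFounded.not_rel_apply_succ (r := (· < ·)) fun n => (t n).weight c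
  exact hn (weight_lt_of_rewrite hc (fun ρ hρ => ρ.weight_subst_lt hc (hP ρ hρ)) (ht n))

open Classical in
noncomputable def needsWeight (P : TRS σ ν) (f : σ) : ℕ :=
  2 + if ∃ g, P.NeedsEdge f g then (P.rules.map fun ρ => ρ.rhs.weight fun _ => 2).sum else 0

theorem weight_rhs_lt_needsWeight
    (h : ¬ ∃ f : σ, (∃ g : σ, P.NeedsEdge g f) ∧ (∃ g : σ, P.NeedsEdge f g))
    {ρ : Rule σ ν} (hρ : ρ ∈ P.rules) {f : σ} (hf : ρ.lhs.root = some f) :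
    ρ.rhs.weight P.needsWeight < P.needsWeight f := by
  have hsymb : ∀ g ∈ ρ.rhs.symbols, P.needsWeight g = 2 := fun g hg => by
    have hout : ¬ ∃ g', P.NeedsEdge g g' := fun hout => h ⟨g, ⟨f, ρ, hρ, hf, hg⟩, hout⟩
    simp [needsWeight, hout]
  rw [Term.weight_congr hsymb]
  cases hr : ρ.rhs with
  | var v => rw [Term.weight_var, needsWeight]; omega
  | app g us =>
    have hout : ∃ g, P.NeedsEdge f g := ⟨g, ρ, hρ, hf, by simp [hr]⟩
    have hle : (Term.app g us).weight (fun _ => 2) ≤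
        (P.rules.map fun ρ => ρ.rhs.weight fun _ => 2).sum :=
      hr ▸ List.single_le_sum (fun _ _ => Nat.zero_le _) _ (List.mem_map_of_mem hρ)
    simp only [needsWeight, hout, if_true]
    omega

end TRS

/-- If the needs graph of `P` has no vertex with in-degree at
least one and out-degree at least one, then the needs graph is acyclic and the
rewrite relation of `P` is terminating: there is no infinite rewrite sequence
`t 0 →_P t 1 →_P t 2 →_P ⋯`. -/
theorem no_useful_vertex_implies_acyclic_and_terminating {σ ν : Type}
    (P : TRS σ ν)
    (h : ¬ ∃ f : σ, (∃ g : σ, P.NeedsEdge g f) ∧ (∃ g : σ, P.NeedsEdge f g)) :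
    (¬ ∃ f : σ, Relation.TransGen P.NeedsEdge f f) ∧
      ¬ ∃ t : ℕ → Term σ ν, ∀ n : ℕ, P.Rewrite (t n) (t (n + 1)) :=
  ⟨fun ⟨f, hf⟩ => h ⟨f, hf.exists_rel_left_and_right⟩,
    TRS.not_exists_infinite_rewrite_of_weight_rhs_lt (fun _ => by simp [TRS.needsWeight])
      fun _ hρ _ hf => TRS.weight_rhs_lt_needsWeight h hρ hf⟩
end
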